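/- arXiv:1412.2309 — 7 statements merged into one kernel-verified Lean document; each statement's English description precedes it below -/
import Mathlib

section
/- Let H be a finite nonempty type and let a_i, a_j, γ : H → ℝ be functions such that Σ_{h} a_i(h)·γ(h) ≠ Σ_{h} a_j(h)·γ(h). Then the set of pairs (b_i, b_j) ∈ (H → ℝ) × (H → ℝ) satisfying (Σ_{h} γ(h)·b_j(h)) · (Σ_{h} a_i(h)·γ(h)·b_i(h)) = (Σ_{h} γ(h)·b_i(h)) · (Σ_{h} a_j(h)·γ(h)·b_j(h)) has Lebesgue measure zero in ℝ^{2|H|}. -/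
open MeasureTheory

lemma hyp_null {H : Type} [Fintype H] (L : H → ℝ) (hL : ∃ h₀, L h₀ ≠ 0) :
    volume {x : H → ℝ | ∑ h, L h * x h = 0} = 0 := by
  classical
  obtain ⟨h₀, hh₀⟩ := hL
  let φ : (H → ℝ) →ₗ[ℝ] ℝ :=
    { toFun := fun x => ∑ h, L h * x h
      map_add' := by intro x y; simp [mul_add, Finset.sum_add_distrib]
      map_smul' := by
        intro c x
        simp only [Pi.smul_apply, smul_eq_mul, RingHom.id_apply, Finset.mul_sum]
        exact Finset.sum_congr rfl fun h _ => by ring }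
  have hset : {x : H → ℝ | ∑ h, L h * x h = 0} = (LinearMap.ker φ : Set (H → ℝ)) := by
    ext x; simp [LinearMap.mem_ker, φ]
  rw [hset]
  refine Measure.addHaar_submodule _ _ ?_
  intro htop
  have hx : Pi.single h₀ (1:ℝ) ∈ LinearMap.ker φ := htop ▸ Submodule.mem_top
  rw [LinearMap.mem_ker] at hx
  have : φ (Pi.single h₀ (1:ℝ)) = L h₀ := by
    simp [φ, Pi.single_apply, mul_ite, Finset.sum_ite_eq']
  rw [this] at hx
  exact hh₀ hx

theorem pairwise_constraint_measure_zero (H : Type) [Fintype H] [Nonempty H]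
    (aI aJ γ : H → ℝ)
    (hne : ∑ h, aI h * γ h ≠ ∑ h, aJ h * γ h) :
    volume {b : (H → ℝ) × (H → ℝ) |
      (∑ h, γ h * b.2 h) * (∑ h, aI h * γ h * b.1 h) =
      (∑ h, γ h * b.1 h) * (∑ h, aJ h * γ h * b.2 h)} = 0 := by
  set C : (H → ℝ) → ℝ := fun x => ∑ h, aI h * γ h * x h with hC
  set D : (H → ℝ) → ℝ := fun x => ∑ h, γ h * x h with hD
  -- there is h₀ with γ h₀ ≠ 0
  obtain ⟨h₀, hγ₀⟩ : ∃ h₀, γ h₀ ≠ 0 := by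
    by_contra hall
    push_neg at hall
    exact hne (by simp [hall])
  -- the bad set of first coordinates is null
  set bad : Set (H → ℝ) := {x | ∀ h, γ h * C x = aJ h * γ h * D x} with hbad
  have badnull : volume bad = 0 := by
    by_cases hA : ∀ h, aI h * γ h = aJ h₀ * γ h
    · by_cases hB : ∀ h, aJ h * γ h = aJ h₀ * γ h
      · exfalso
        apply hne
        calc ∑ h, aI h * γ h = ∑ h, aJ h₀ * γ h := Finset.sum_congr rfl fun h _ => hA h
          _ = ∑ h, aJ h * γ h := (Finset.sum_congr rfl fun h _ => hB h).symm
      · push_neg at hB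
        obtain ⟨h₁, hB1⟩ := hB
        have hγ1 : γ h₁ ≠ 0 := fun h => hB1 (by simp [h])
        have haJ : aJ h₁ ≠ aJ h₀ := fun h => hB1 (by rw [h])
        refine measure_mono_null ?_ (hyp_null γ ⟨h₀, hγ₀⟩)
        intro x hx
        have hCx : C x = aJ h₀ * D x := by
          rw [hC, hD]
          simp only [Finset.mul_sum]
          exact Finset.sum_congr rfl fun h _ => by rw [← mul_assoc, hA h]
        have h1 := hx h₁
        rw [hCx] at h1
        have : (γ h₁ * (aJ h₀ - aJ h₁)) * D x = 0 := by ring_nf; linarith [h1]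
        rcases mul_eq_zero.mp this with h | h
        · exact absurd h (mul_ne_zero hγ1 (sub_ne_zero.mpr haJ.symm))
        · exact h
    · push_neg at hA
      obtain ⟨h₁, hA1⟩ := hA
      refine measure_mono_null ?_
        (hyp_null (fun h => aI h * γ h - aJ h₀ * γ h) ⟨h₁, sub_ne_zero.mpr hA1⟩)
      intro x hx
      have h0 := hx h₀
      have hCx : C x = aJ h₀ * D x := by
        have : γ h₀ * C x = γ h₀ * (aJ h₀ * D x) := by rw [h0]; ring
        exact mul_left_cancel₀ hγ₀ this
      show ∑ h, (aI h * γ h - aJ h₀ * γ h) * x h = 0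
      have : ∑ h, (aI h * γ h - aJ h₀ * γ h) * x h = C x - aJ h₀ * D x := by
        rw [hC, hD, Finset.mul_sum, ← Finset.sum_sub_distrib]
        exact Finset.sum_congr rfl fun h _ => by ring
      rw [this, hCx, sub_self]
  -- measurability of the set
  have hmeas : MeasurableSet {b : (H → ℝ) × (H → ℝ) |
      (∑ h, γ h * b.2 h) * (∑ h, aI h * γ h * b.1 h) =
      (∑ h, γ h * b.1 h) * (∑ h, aJ h * γ h * b.2 h)} := by
    apply measurableSet_eq_fun <;> fun_prop
  rw [show (volume : Measure ((H → ℝ) × (H → ℝ))) = volume.prod volume from rfl,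
    Measure.measure_prod_null hmeas]
  have hae : ∀ᵐ x : H → ℝ, x ∉ bad := by
    rw [ae_iff]
    simpa using badnull
  filter_upwards [hae] with x hx
  simp only [Pi.zero_apply]
  have hslice : Prod.mk x ⁻¹' {b : (H → ℝ) × (H → ℝ) |
      (∑ h, γ h * b.2 h) * (∑ h, aI h * γ h * b.1 h) =
      (∑ h, γ h * b.1 h) * (∑ h, aJ h * γ h * b.2 h)} =
      {y : H → ℝ | ∑ h, (γ h * C x - aJ h * γ h * D x) * y h = 0} := by
    ext y
    simp only [Set.mem_preimage, Set.mem_setOf_eq]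
    have key : ∑ h, (γ h * C x - aJ h * γ h * D x) * y h =
        (∑ h, γ h * y h) * C x - D x * ∑ h, aJ h * γ h * y h := by
      rw [Finset.sum_mul, Finset.mul_sum, ← Finset.sum_sub_distrib]
      exact Finset.sum_congr rfl fun h _ => by ring
    constructor
    · intro h; rw [key, sub_eq_zero, hC, hD]; simpa using h
    · intro h; rw [key, sub_eq_zero, hC, hD] at h; simpa using h
  rw [hslice]
  apply hyp_null
  rw [hbad] at hx
  simp only [Set.mem_setOf_eq, not_forall] at hx
  obtain ⟨h, hh⟩ := hx
  exact ⟨h, sub_ne_zero.mpr hh⟩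
end

section
/- Let H and I be finite nonempty types, and fix α : H × I → ℝ and γ : H → ℝ. Then the set of β ∈ (I × H → ℝ) for which there exist i, j ∈ I with (Σ_{h} γ(h)·β(j,h)) · (Σ_{h} α(h,i)·γ(h)·β(i,h)) = (Σ_{h} γ(h)·β(i,h)) · (Σ_{h} α(h,j)·γ(h)·β(j,h)) and Σ_{h} α(h,i)·γ(h) ≠ Σ_{h} α(h,j)·γ(h) has Lebesgue measure zero in ℝ^{|I|·|H|}. -/
/-!
Fix `i ≠ j` with different causal probabilities and pick `h₀` with
`α (h₀, i) * γ h₀ ≠ α (h₀, j) * γ h₀`. The cross-multiplied difference `F β` is affine in the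
coordinate `β (i, h₀)`, with slope `a β` depending only on row `j`, and `a` is in turn affine in
`β (j, h₀)` with slope `γ h₀ ^ 2 * (α (h₀, i) - α (h₀, j)) ≠ 0`. Integrating along one coordinate,
both `{a = 0}` and `{F = 0, a ≠ 0}` are null.
-/

open MeasureTheory

namespace MeasureTheory.Measure

theorem pi_null_of_forall_update_null {δ : Type*} [Fintype δ] [DecidableEq δ]
    {X : δ → Type*} [∀ i, MeasurableSpace (X i)] {μ : ∀ i, Measure (X i)}
    [∀ i, SigmaFinite (μ i)] (k : δ) {s : Set (∀ i, X i)} (hs : MeasurableSet s)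
    (h : ∀ x, μ k {t | Function.update x k t ∈ s} = 0) : Measure.pi μ s = 0 := by
  have hslice : ∫⋯∫⁻_{k}, s.indicator 1 ∂μ = ∫⋯∫⁻_{k}, 0 ∂μ := by
    ext x
    simp only [lmarginal_singleton, Pi.zero_apply, lintegral_zero]
    exact (lintegral_indicator_one (measurable_update x hs)).trans (h x)
  simpa [lintegral_indicator_one hs] using
    lintegral_eq_of_lmarginal_eq {k} (measurable_one.indicator hs) measurable_zero hslice

end MeasureTheory.Measure

theorem volume_setOf_eq_zero_and_slope_ne_zero_of_affine {ι : Type*} [Fintype ι] [DecidableEq ι]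
    (k : ι) {f c : (ι → ℝ) → ℝ} (hf : Measurable f) (hc : Measurable c)
    (hf_line : ∀ (x : ι → ℝ) (t : ℝ), f (x + t • (Pi.single k 1 : ι → ℝ)) = f x + t * c x)
    (hc_line : ∀ (x : ι → ℝ) (t : ℝ), c (x + t • (Pi.single k 1 : ι → ℝ)) = c x) :
    volume {x | f x = 0 ∧ c x ≠ 0} = 0 := by
  rw [volume_pi]
  refine Measure.pi_null_of_forall_update_null k
    ((measurableSet_eq_fun hf measurable_const).inter
      (measurableSet_eq_fun hc measurable_const).compl) fun x => ?_
  set y := Function.update x k 0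
  have hupdate : ∀ t, Function.update x k t = y + t • (Pi.single k 1 : ι → ℝ) := by
    intro t; ext i; by_cases hi : i = k <;> simp [y, hi]
  refine Set.Subsingleton.measure_zero ?_ _
  rintro t ⟨ht, hct⟩ t' ⟨ht', -⟩
  simp only [hupdate, hf_line, hc_line] at ht ht' hct
  exact mul_right_cancel₀ hct (by linarith)

section

variable {I H : Type*} [Fintype H]

def weightedRowSum (w : H → ℝ) (i : I) (β : I × H → ℝ) : ℝ := ∑ h, w h * β (i, h)

@[fun_prop]
theorem measurable_weightedRowSum (w : H → ℝ) (i : I) : Measurable (weightedRowSum w i) := by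
  unfold weightedRowSum; fun_prop

variable [DecidableEq I] [DecidableEq H]

theorem weightedRowSum_add_smul_single_self (w : H → ℝ) (i : I) (h₀ : H) (β : I × H → ℝ)
    (t : ℝ) :
    weightedRowSum w i (β + t • Pi.single (i, h₀) 1) = weightedRowSum w i β + t * w h₀ := by
  simp [weightedRowSum, Pi.single_apply, mul_add, Finset.sum_add_distrib, mul_comm]

theorem weightedRowSum_add_smul_single_of_ne (w : H → ℝ) {i j : I} (hij : i ≠ j) (h₀ : H)
    (β : I × H → ℝ) (t : ℝ) :
    weightedRowSum w j (β + t • Pi.single (i, h₀) 1) = weightedRowSum w j β := by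
  simp [weightedRowSum, hij.symm]

variable [Fintype I]

theorem volume_setOf_weightedRowSum_cross_eq {i j : I} (hij : i ≠ j) {u v v' : H → ℝ} {h₀ : H}
    (hu : u h₀ ≠ 0) (hv : v h₀ ≠ v' h₀) :
    volume {β : I × H → ℝ | weightedRowSum u j β * weightedRowSum v i β =
      weightedRowSum u i β * weightedRowSum v' j β} = 0 := by
  set F := fun β => weightedRowSum u j β * weightedRowSum v i β -
    weightedRowSum u i β * weightedRowSum v' j β
  set a := fun β => weightedRowSum u j β * v h₀ - u h₀ * weightedRowSum v' j β
  have hsub : {β | weightedRowSum u j β * weightedRowSum v i β =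
        weightedRowSum u i β * weightedRowSum v' j β} ⊆
      {β | a β = 0 ∧ u h₀ * (v h₀ - v' h₀) ≠ 0} ∪ {β | F β = 0 ∧ a β ≠ 0} := by
    intro β hβ
    by_cases haβ : a β = 0
    · exact Or.inl ⟨haβ, mul_ne_zero hu (sub_ne_zero.mpr hv)⟩
    · exact Or.inr ⟨sub_eq_zero.mpr hβ, haβ⟩
  refine measure_mono_null hsub (measure_union_null ?_ ?_)
  · refine volume_setOf_eq_zero_and_slope_ne_zero_of_affine (j, h₀) (by fun_prop)
      measurable_const (fun β t => ?_) fun _ _ => rfl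
    simp only [a, weightedRowSum_add_smul_single_self]
    ring
  · refine volume_setOf_eq_zero_and_slope_ne_zero_of_affine (i, h₀) (by fun_prop) (by fun_prop)
      (fun β t => ?_) fun β t => ?_
    · simp only [F, a, weightedRowSum_add_smul_single_self,
        weightedRowSum_add_smul_single_of_ne _ hij]
      ring
    · simp only [a, weightedRowSum_add_smul_single_of_ne _ hij]

end

theorem fixed_alpha_gamma_violation_measure_zero_general
    (H I : Type) [Fintype H] [Fintype I]
    (α : H × I → ℝ) (γ : H → ℝ) :
    volume {β : I × H → ℝ |
      ∃ i j : I,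
        (∑ h, γ h * β (j, h)) * (∑ h, α (h, i) * γ h * β (i, h)) =
          (∑ h, γ h * β (i, h)) * (∑ h, α (h, j) * γ h * β (j, h)) ∧
        ∑ h, α (h, i) * γ h ≠ ∑ h, α (h, j) * γ h} = 0 := by
  classical
  simp only [Set.ofPred_exists, measure_iUnion_null_iff]
  intro i j
  by_cases hsum : ∑ h, α (h, i) * γ h = ∑ h, α (h, j) * γ h
  · simp [hsum]
  obtain ⟨h₀, hh₀⟩ : ∃ h₀, α (h₀, i) * γ h₀ ≠ α (h₀, j) * γ h₀ := by
    by_contra! heq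
    exact hsum (Finset.sum_congr rfl fun h _ => heq h)
  have hγ : γ h₀ ≠ 0 := fun h => hh₀ (by simp [h])
  have hij : i ≠ j := by rintro rfl; exact hsum rfl
  exact measure_mono_null (fun β hβ => hβ.1) (volume_setOf_weightedRowSum_cross_eq hij hγ hh₀)

theorem fixed_alpha_gamma_violation_measure_zero
    (H I : Type) [Fintype H] [Fintype I] [Nonempty H] [Nonempty I]
    (α : H × I → ℝ) (γ : H → ℝ) :
    volume {β : I × H → ℝ |
      ∃ i j : I,
        (∑ h, γ h * β (j, h)) * (∑ h, α (h, i) * γ h * β (i, h)) =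
          (∑ h, γ h * β (i, h)) * (∑ h, α (h, j) * γ h * β (j, h)) ∧
        ∑ h, α (h, i) * γ h ≠ ∑ h, α (h, j) * γ h} = 0 :=
  fixed_alpha_gamma_violation_measure_zero_general H I α γ
end

section
/- (Auxiliary Theorem.) Let H and I be finite nonempty types. Then the set of parameter triples (α, β, γ) ∈ (H × I → ℝ) × (I × H → ℝ) × (H → ℝ) for which there exist i, j ∈ I with (Σ_{h} γ(h)·β(j,h)) · (Σ_{h} α(h,i)·γ(h)·β(i,h)) = (Σ_{h} γ(h)·β(i,h)) · (Σ_{h} α(h,j)·γ(h)·β(j,h)) and Σ_{h} α(h,i)·γ(h) ≠ Σ_{h} α(h,j)·γ(h) has Lebesgue measure zero in the full parameter space ℝ^{|H|·|I|} × ℝ^{|I|·|H|} × ℝ^{|H|}. -/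
/-!
The cross-multiplied condition says that a polynomial in the parameters vanishes, and for `i ≠ j`
this polynomial is nonzero: at `β ≡ 1`, `γ = 𝟙_{h₀}` and `α(h, k) = [k = i]` it takes the value
`1`. The zero set of a nonzero real polynomial is Lebesgue-null, by induction on the number of
variables: for almost every value of the last `n` variables the leading coefficient in the first
one does not vanish, so the slice is the finite root set of a nonzero univariate polynomial, and
Fubini's theorem concludes.
-/

open MeasureTheory

namespace MvPolynomial

theorem volume_zeroSet_fin_eq_zero :
    ∀ (n : ℕ) {P : MvPolynomial (Fin n) ℝ}, P ≠ 0 → volume {x : Fin n → ℝ | eval x P = 0} = 0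
  | 0, P, hP => by
    obtain ⟨c, rfl⟩ := C_surjective (Fin 0) P
    simp_all
  | n + 1, P, hP => by
    set Q := finSuccEquiv ℝ n P
    have hQ : Q ≠ 0 := (map_ne_zero_iff _ (finSuccEquiv ℝ n).injective).2 hP
    have hae : ∀ᵐ y : Fin n → ℝ, Q.map (eval y) ≠ 0 := by
      have hlc := volume_zeroSet_fin_eq_zero n (Polynomial.leadingCoeff_ne_zero.2 hQ)
      filter_upwards [measure_eq_zero_iff_ae_notMem.1 hlc] with y hy hzero
      exact hy (by simpa using congrArg (Polynomial.coeff · Q.natDegree) hzero)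
    let e := MeasurableEquiv.piFinSuccAbove (fun _ : Fin (n + 1) => ℝ) 0
    set S := {x : Fin (n + 1) → ℝ | eval x P = 0}
    have hS : MeasurableSet (e.symm ⁻¹' S) :=
      (isClosed_eq (continuous_eval P) continuous_const).measurableSet.preimage e.symm.measurable
    have hsection :
        ∀ y, (fun a => (a, y)) ⁻¹' (e.symm ⁻¹' S) = {a | (Q.map (eval y)).IsRoot a} := by
      intro y
      ext a
      simp only [Set.mem_preimage, Set.mem_ofPred_eq, e, S,
        MeasurableEquiv.piFinSuccAbove_symm_apply, Fin.insertNthEquiv_zero, Polynomial.IsRoot.def]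
      exact Iff.of_eq (congrArg (· = 0) (eval_eq_eval_mv_eval' y a P))
    rw [← (volume_preserving_piFinSuccAbove (fun _ => ℝ) 0).symm.measure_preimage_equiv,
      Measure.volume_eq_prod, Measure.prod_apply_symm hS]
    refine (lintegral_congr_ae ?_).trans lintegral_zero
    filter_upwards [hae] with y hy
    rw [hsection]
    exact (Polynomial.finite_setOfPred_isRoot hy).measure_zero _

theorem volume_zeroSet_eq_zero {ι : Type*} [Fintype ι] {P : MvPolynomial ι ℝ} (hP : P ≠ 0) :
    volume {x : ι → ℝ | eval x P = 0} = 0 := by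
  let e := Fintype.equivFin ι
  let φ := MeasurableEquiv.piCongrLeft (fun _ : ι => ℝ) e.symm
  have hφ : ∀ y, φ y = y ∘ e := by
    intro y
    ext i
    simpa [φ] using MeasurableEquiv.piCongrLeft_apply_apply (β := fun _ : ι => ℝ) e.symm y (e i)
  have hpre : φ ⁻¹' {x | eval x P = 0} = {y | eval y (rename e P) = 0} := by
    ext y
    simp [hφ, eval_rename]
  rw [← (volume_measurePreserving_piCongrLeft (fun _ => ℝ) e.symm).measure_preimage_equiv, hpre]
  exact volume_zeroSet_fin_eq_zero _ ((map_ne_zero_iff _ (rename_injective e e.injective)).2 hP)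

end MvPolynomial

theorem measurePreserving_sumElim₃ (α β γ : Type*) [Fintype α] [Fintype β] [Fintype γ] :
    MeasurePreserving (fun p : (α → ℝ) × (β → ℝ) × (γ → ℝ) => Sum.elim p.1 (Sum.elim p.2.1 p.2.2))
      volume volume :=
  (volume_measurePreserving_sumPiEquivProdPi_symm fun _ : α ⊕ β ⊕ γ => ℝ).comp
    ((MeasurePreserving.id volume).prod
      (volume_measurePreserving_sumPiEquivProdPi_symm fun _ : β ⊕ γ => ℝ))

section Model

open MvPolynomial

variable {H I R S : Type*} [Fintype H] [CommRing R] [CommRing S]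

/-- Vanishes iff `P(T = 0 | I = i) = P(T = 0 | I = j)`, where
`P(T = 0 | I = i) = (∑ h, α (h, i) * γ h * β (i, h)) / ∑ h, γ h * β (i, h)`, as long as both
denominators are nonzero. -/
def observationalDiscrepancy (α : H × I → R) (β : I × H → R) (γ : H → R) (i j : I) : R :=
  (∑ h, γ h * β (j, h)) * (∑ h, α (h, i) * γ h * β (i, h)) -
    (∑ h, γ h * β (i, h)) * (∑ h, α (h, j) * γ h * β (j, h))

theorem map_observationalDiscrepancy (f : R →+* S) (α : H × I → R) (β : I × H → R) (γ : H → R)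
    (i j : I) :
    f (observationalDiscrepancy α β γ i j) =
      observationalDiscrepancy (f ∘ α) (f ∘ β) (f ∘ γ) i j := by
  simp [observationalDiscrepancy, map_sum]

theorem observationalDiscrepancy_indicator [DecidableEq H] [DecidableEq I] (h₀ : H) {i j : I}
    (hij : i ≠ j) :
    observationalDiscrepancy (fun hk => if hk.2 = i then 1 else 0) 1 (Pi.single h₀ (1 : R)) i j
      = 1 := by
  simp [observationalDiscrepancy, Pi.single_apply, hij.symm]

variable (H R) in
noncomputable def observationalDiscrepancyPoly (i j : I) : MvPolynomial (H × I ⊕ I × H ⊕ H) R :=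
  observationalDiscrepancy (X ∘ Sum.inl) (X ∘ Sum.inr ∘ Sum.inl) (X ∘ Sum.inr ∘ Sum.inr) i j

theorem eval_observationalDiscrepancyPoly (x : H × I ⊕ I × H ⊕ H → R) (i j : I) :
    eval x (observationalDiscrepancyPoly H R i j) =
      observationalDiscrepancy (x ∘ Sum.inl) (x ∘ Sum.inr ∘ Sum.inl) (x ∘ Sum.inr ∘ Sum.inr)
        i j := by
  simp [observationalDiscrepancyPoly, map_observationalDiscrepancy, Function.comp_def]

theorem observationalDiscrepancyPoly_ne_zero [Nontrivial R] (h₀ : H) {i j : I} (hij : i ≠ j) :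
    observationalDiscrepancyPoly H R i j ≠ 0 := by
  classical
  intro h
  have := congrArg (eval (Sum.elim (fun hk => if hk.2 = i then 1 else 0)
    (Sum.elim 1 (Pi.single h₀ (1 : R))))) h
  rw [eval_observationalDiscrepancyPoly, map_zero] at this
  exact one_ne_zero ((observationalDiscrepancy_indicator h₀ hij).symm.trans this)

theorem volume_setOf_observationalDiscrepancy_eq_zero [Fintype I] (h₀ : H) {i j : I}
    (hij : i ≠ j) :
    volume {p : (H × I → ℝ) × (I × H → ℝ) × (H → ℝ) |
      observationalDiscrepancy p.1 p.2.1 p.2.2 i j = 0} = 0 := by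
  have hpre : {p : (H × I → ℝ) × (I × H → ℝ) × (H → ℝ) |
      observationalDiscrepancy p.1 p.2.1 p.2.2 i j = 0} =
      (fun p => Sum.elim p.1 (Sum.elim p.2.1 p.2.2)) ⁻¹'
        {x | eval x (observationalDiscrepancyPoly H ℝ i j) = 0} := by
    ext p
    simp [eval_observationalDiscrepancyPoly, Function.comp_def]
  rw [hpre]
  exact (measurePreserving_sumElim₃ _ _ _).quasiMeasurePreserving.preimage_null
    (volume_zeroSet_eq_zero (observationalDiscrepancyPoly_ne_zero h₀ hij))

end Model

theorem auxiliary_theorem_measure_zero_general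
    (H I : Type) [Fintype H] [Fintype I] :
    volume {p : (H × I → ℝ) × (I × H → ℝ) × (H → ℝ) |
      ∃ i j : I,
        (∑ h, p.2.2 h * p.2.1 (j, h)) * (∑ h, p.1 (h, i) * p.2.2 h * p.2.1 (i, h)) =
          (∑ h, p.2.2 h * p.2.1 (i, h)) * (∑ h, p.1 (h, j) * p.2.2 h * p.2.1 (j, h)) ∧
        ∑ h, p.1 (h, i) * p.2.2 h ≠ ∑ h, p.1 (h, j) * p.2.2 h} = 0 := by
  rcases isEmpty_or_nonempty H with _ | ⟨⟨h₀⟩⟩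
  · simp
  refine measure_mono_null (t := ⋃ i, ⋃ j, ⋃ (_ : i ≠ j),
    {p | observationalDiscrepancy p.1 p.2.1 p.2.2 i j = 0}) ?_ ?_
  · rintro p ⟨i, j, heq, hne⟩
    exact Set.mem_iUnion₂.2 ⟨i, j, Set.mem_iUnion.2
      ⟨fun hij => hne (hij ▸ rfl), sub_eq_zero.2 heq⟩⟩
  · exact measure_iUnion_null fun i => measure_iUnion_null fun j => measure_iUnion_null
      fun hij => volume_setOf_observationalDiscrepancy_eq_zero h₀ hij

theorem auxiliary_theorem_measure_zero
    (H I : Type) [Fintype H] [Fintype I] [Nonempty H] [Nonempty I] :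
    volume {p : (H × I → ℝ) × (I × H → ℝ) × (H → ℝ) |
      ∃ i j : I,
        (∑ h, p.2.2 h * p.2.1 (j, h)) * (∑ h, p.1 (h, i) * p.2.2 h * p.2.1 (i, h)) =
          (∑ h, p.2.2 h * p.2.1 (i, h)) * (∑ h, p.1 (h, j) * p.2.2 h * p.2.1 (j, h)) ∧
        ∑ h, p.1 (h, i) * p.2.2 h ≠ ∑ h, p.1 (h, j) * p.2.2 h} = 0 :=
  auxiliary_theorem_measure_zero_general H I
end

section
/- There exist a finite type H with |H| = 2, a type I with |I| = 3, and parameters α : H × I → ℝ, β : I × H → ℝ, γ : H → ℝ satisfying: 0 ≤ α(h,i) ≤ 1 for all h,i; β(i,h) ≥ 0 and Σ_{i} β(i,h) = 1 for each h; γ(h) ≥ 0 and Σ_{h} γ(h) = 1; M(i) = Σ_{h} β(i,h)·γ(h) > 0 for all i; and two distinct images i, j ∈ I such that p_obs(i) = p_obs(j) while p_caus(i) ≠ p_caus(j), where p_obs(i) = (Σ_{h} α(h,i)·β(i,h)·γ(h)) / M(i) and p_caus(i) = Σ_{h} α(h,i)·γ(h). -/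
/-- There is a valid generative distribution whose observational partition is a
proper coarsening of its causal partition: two images that are observationally
equivalent yet causally distinguishable (a witness that the measure-zero
exceptional set of the Causal Coarsening Theorem is non-empty). -/
theorem observational_proper_coarsening_example :
    ∃ (H I : Type) (_ : Fintype H) (_ : Fintype I),
      Fintype.card H = 2 ∧ Fintype.card I = 3 ∧
      ∃ (α : H × I → ℝ) (β : I × H → ℝ) (γ : H → ℝ),
        (∀ h i, 0 ≤ α (h, i) ∧ α (h, i) ≤ 1) ∧
        (∀ i h, 0 ≤ β (i, h)) ∧ (∀ h, ∑ i, β (i, h) = 1) ∧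
        (∀ h, 0 ≤ γ h) ∧ (∑ h, γ h = 1) ∧
        (∀ i, 0 < ∑ h, β (i, h) * γ h) ∧
        ∃ i j : I, i ≠ j ∧
          (∑ h, α (h, i) * β (i, h) * γ h) / (∑ h, β (i, h) * γ h) =
            (∑ h, α (h, j) * β (j, h) * γ h) / (∑ h, β (j, h) * γ h) ∧
          (∑ h, α (h, i) * γ h) ≠ ∑ h, α (h, j) * γ h := by
  refine ⟨Fin 2, Fin 3, inferInstance, inferInstance, rfl, rfl,
    fun p => !![(1:ℝ),1,0; 0,1/2,0] p.1 p.2,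
    fun p => !![(1/2:ℝ),1/4; 1/4,1/2; 1/4,1/4] p.1 p.2,
    ![1/2,1/2], ?_, ?_, ?_, ?_, ?_, ?_, 0, 1, ?_, ?_, ?_⟩ <;>
  first
  | (intro h i; fin_cases h <;> fin_cases i <;> norm_num)
  | (intro h; fin_cases h <;>
      simp [Fin.sum_univ_succ] <;> norm_num)
  | simp [Fin.sum_univ_succ] <;> norm_num
end

section
/- There exist a finite type H with |H| = 2, a type I with |I| = 3, and parameters α : H × I → ℝ, β : I × H → ℝ, γ : H → ℝ satisfying: 0 ≤ α(h,i) ≤ 1 for all h,i; β(i,h) ≥ 0 and Σ_{i} β(i,h) = 1 for each h; γ(h) ≥ 0 and Σ_{h} γ(h) = 1; M(i) = Σ_{h} β(i,h)·γ(h) > 0 for all i; together with images i, j, k, l ∈ I such that p_obs(i) = p_obs(j) and p_caus(i) ≠ p_caus(j), and p_caus(k) = p_caus(l) and p_obs(k) ≠ p_obs(l), where p_obs(i) = (Σ_{h} α(h,i)·β(i,h)·γ(h)) / M(i) and p_caus(i) = Σ_{h} α(h,i)·γ(h). In other words, neither the causal partition nor the observational partition induced by this distribution is a coarsening of the other. 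-/
/-- There is a valid generative distribution whose causal and observational
partitions are incompatible: neither is a coarsening of the other. -/
theorem incompatible_partitions_example :
    ∃ (H I : Type) (_ : Fintype H) (_ : Fintype I),
      Fintype.card H = 2 ∧ Fintype.card I = 3 ∧
      ∃ (α : H × I → ℝ) (β : I × H → ℝ) (γ : H → ℝ),
        (∀ h i, 0 ≤ α (h, i) ∧ α (h, i) ≤ 1) ∧
        (∀ i h, 0 ≤ β (i, h)) ∧ (∀ h, ∑ i, β (i, h) = 1) ∧
        (∀ h, 0 ≤ γ h) ∧ (∑ h, γ h = 1) ∧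
        (∀ i, 0 < ∑ h, β (i, h) * γ h) ∧
        (∃ i j : I,
          (∑ h, α (h, i) * β (i, h) * γ h) / (∑ h, β (i, h) * γ h) =
            (∑ h, α (h, j) * β (j, h) * γ h) / (∑ h, β (j, h) * γ h) ∧
          (∑ h, α (h, i) * γ h) ≠ ∑ h, α (h, j) * γ h) ∧
        (∃ k l : I,
          (∑ h, α (h, k) * γ h) = (∑ h, α (h, l) * γ h) ∧
          (∑ h, α (h, k) * β (k, h) * γ h) / (∑ h, β (k, h) * γ h) ≠
            (∑ h, α (h, l) * β (l, h) * γ h) / (∑ h, β (l, h) * γ h)) := by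
  refine ⟨Fin 2, Fin 3, inferInstance, inferInstance, rfl, rfl,
    fun p => ![![(1:ℝ), 0, 1], ![0, 1, 1]] p.1 p.2,
    fun p => ![![(1:ℝ)/2, 1/3], ![0, 1/3], ![1/2, 1/3]] p.1 p.2,
    fun _ => 1/2, ?_, ?_, ?_, ?_, ?_, ?_, ⟨1, 2, ?_, ?_⟩, ⟨0, 1, ?_, ?_⟩⟩
  · intro h i; fin_cases h <;> fin_cases i <;> norm_num
  · intro i h; fin_cases i <;> fin_cases h <;> norm_num
  · intro h; fin_cases h <;> simp [Fin.sum_univ_succ] <;> norm_num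
  · intro h; norm_num
  · simp [Fin.sum_univ_succ]
  · intro i; fin_cases i <;> simp [Fin.sum_univ_succ] <;> norm_num
  · simp [Fin.sum_univ_succ]; norm_num
  · simp [Fin.sum_univ_succ]
  · simp [Fin.sum_univ_succ]
  · simp [Fin.sum_univ_succ]; norm_num
end

section
/- There exist parameters a : Bool × Bool → ℝ, b : Bool × Bool → ℝ, γ : Bool → ℝ with 0 < a(h,i) < 1 for all h,i, b(i,h) > 0 with b(false,h) + b(true,h) = 1 for each h, and γ(h) > 0 with γ(false) + γ(true) = 1, such that, defining for each image i ∈ Bool the interventional probability p_do(i) = Σ_{h} a(h,i)·γ(h) and the observational probability p_obs(i) = (Σ_{h} a(h,i)·b(i,h)·γ(h)) / (Σ_{h} b(i,h)·γ(h)), all three of the following hold: (1) p_do(true) ≠ p_do(false); (2) p_obs(true) ≠ p_obs(false); (3) there exists i ∈ Bool with p_obs(i) ≠ p_do(i). -/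
/-- The causal variable can retain predictive non-causal information: there is a
valid distribution on the confounded graph `I → T`, `H → I`, `H → T` (all variables
binary) for which the interventional probabilities of the two images differ, the
observational probabilities of the two images differ, and yet the observational and
interventional probabilities do not coincide. -/
theorem predictive_noncausal_information_example :
    ∃ (a b : Bool × Bool → ℝ) (γ : Bool → ℝ),
      (∀ h i, 0 < a (h, i) ∧ a (h, i) < 1) ∧
      (∀ i h, 0 < b (i, h)) ∧
      (∀ h, b (false, h) + b (true, h) = 1) ∧
      (∀ h, 0 < γ h) ∧ γ false + γ true = 1 ∧
      (∑ h, a (h, true) * γ h) ≠ (∑ h, a (h, false) * γ h) ∧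
      (∑ h, a (h, true) * b (true, h) * γ h) / (∑ h, b (true, h) * γ h) ≠
        (∑ h, a (h, false) * b (false, h) * γ h) / (∑ h, b (false, h) * γ h) ∧
      ∃ i : Bool,
        (∑ h, a (h, i) * b (i, h) * γ h) / (∑ h, b (i, h) * γ h) ≠
          ∑ h, a (h, i) * γ h := by
  refine ⟨fun p => match p with
      | (false, false) => 1/5
      | (true, false) => 2/5
      | (false, true) => 3/5
      | (true, true) => 4/5,
    fun p => match p with
      | (true, false) => 1/4
      | (true, true) => 3/4
      | (false, false) => 3/4
      | (false, true) => 1/4,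
    fun _ => 1/2, ?_, ?_, ?_, ?_, ?_, ?_, ?_, ⟨true, ?_⟩⟩ <;>
    simp only [Fintype.sum_bool] <;> first
      | norm_num
      | (rintro (_|_) (_|_) <;> norm_num)
      | (rintro (_|_) <;> norm_num)
end

section
/- Fix an image value i ∈ Bool. The set of parameter triples (a, b, γ) ∈ (Bool × Bool → ℝ) × (Bool × Bool → ℝ) × (Bool → ℝ) satisfying the polynomial equation Σ_{h} a(h,i)·b(i,h)·γ(h) = (Σ_{h} b(i,h)·γ(h)) · (Σ_{h} a(h,i)·γ(h)) has Lebesgue measure zero in ℝ^4 × ℝ^4 × ℝ^2. -/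
open MeasureTheory

lemma hyperplane_null {ι : Type*} [Fintype ι] [DecidableEq ι] (j : ι) (c : ℝ) :
    volume {f : ι → ℝ | f j = c} = 0 := by
  have h : {f : ι → ℝ | f j = c} =
      Set.pi Set.univ (fun k => if k = j then ({c} : Set ℝ) else Set.univ) := by
    ext f
    simp only [Set.mem_setOf_eq, Set.mem_pi, Set.mem_univ, forall_true_left]
    constructor
    · intro hf k
      split_ifs with hk
      · subst hk; simpa using hf
      · trivial
    · intro hf
      have := hf j
      simpa using this
  rw [h, volume_pi_pi]
  exact Finset.prod_eq_zero (Finset.mem_univ j) (by simp)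

lemma quad_null (af at' bf bt : ℝ) (hat : at' ≠ 0) (hbt : bt ≠ 0) :
    volume {q : ℝ × ℝ |
      af * bf * q.1 + at' * bt * q.2 =
        (bf * q.1 + bt * q.2) * (af * q.1 + at' * q.2)} = 0 := by
  have hmeas : MeasurableSet {q : ℝ × ℝ |
      af * bf * q.1 + at' * bt * q.2 =
        (bf * q.1 + bt * q.2) * (af * q.1 + at' * q.2)} := by
    apply measurableSet_eq_fun <;> measurability
  rw [Measure.volume_eq_prod, Measure.measure_prod_null hmeas]
  refine Filter.Eventually.of_forall fun x => ?_
  set c1 : ℝ := (bf * at' + bt * af) * x - at' * bt with hc1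
  set c0 : ℝ := af * bf * x ^ 2 - af * bf * x with hc0
  set c2 : ℝ := at' * bt with hc2
  set p : Polynomial ℝ := Polynomial.C c2 * Polynomial.X ^ 2 +
    Polynomial.C c1 * Polynomial.X + Polynomial.C c0 with hp
  have hpne : p ≠ 0 := by
    intro h0
    have h2 : p.coeff 2 = c2 := by
      simp [hp, Polynomial.coeff_add, Polynomial.coeff_C_mul,
        Polynomial.coeff_X_pow, Polynomial.coeff_C]
    rw [h0] at h2
    simp only [Polynomial.coeff_zero] at h2
    exact mul_ne_zero hat hbt h2.symm
  refine measure_mono_null ?_ ((Polynomial.finite_setOf_isRoot hpne).measure_zero volume)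
  intro y hy
  simp only [Set.mem_preimage, Set.mem_setOf_eq] at hy ⊢
  show p.IsRoot y
  simp only [hp, Polynomial.IsRoot, Polynomial.eval_add, Polynomial.eval_mul,
    Polynomial.eval_C, Polynomial.eval_pow, Polynomial.eval_X, hc0, hc1, hc2]
  linear_combination -hy

lemma quad_null_bool (af at' bf bt : ℝ) (hat : at' ≠ 0) (hbt : bt ≠ 0) :
    volume {γ : Bool → ℝ |
      af * bf * γ false + at' * bt * γ true =
        (bf * γ false + bt * γ true) * (af * γ false + at' * γ true)} = 0 := by
  set S : Set (Bool → ℝ) := {γ : Bool → ℝ |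
      af * bf * γ false + at' * bt * γ true =
        (bf * γ false + bt * γ true) * (af * γ false + at' * γ true)} with hS
  have m0 : Measurable (fun γ : Bool → ℝ => γ false) := measurable_pi_apply false
  have m1 : Measurable (fun γ : Bool → ℝ => γ true) := measurable_pi_apply true
  have hSm : MeasurableSet S := by
    refine measurableSet_eq_fun ?_ ?_
    · exact (m0.const_mul _).add (m1.const_mul _)
    · exact ((m0.const_mul _).add (m1.const_mul _)).mul
        ((m0.const_mul _).add (m1.const_mul _))
  set e := MeasurableEquiv.piCongrLeft (fun _ : Bool => ℝ) finTwoEquiv with he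
  have hmp := volume_measurePreserving_piCongrLeft (fun _ : Bool => ℝ) finTwoEquiv
  have h1 : volume (⇑e ⁻¹' S) = volume S :=
    hmp.measure_preimage hSm.nullMeasurableSet
  rw [← h1]
  have hco : ∀ (g : Fin 2 → ℝ), (e g) false = g 0 ∧ (e g) true = g 1 := by
    intro g
    constructor
    · exact Equiv.piCongrLeft_apply_apply (fun _ : Bool => ℝ) finTwoEquiv g 0
    · exact Equiv.piCongrLeft_apply_apply (fun _ : Bool => ℝ) finTwoEquiv g 1
  have h2 : ⇑e ⁻¹' S = ⇑(MeasurableEquiv.finTwoArrow (α := ℝ)) ⁻¹'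
      {q : ℝ × ℝ | af * bf * q.1 + at' * bt * q.2 =
        (bf * q.1 + bt * q.2) * (af * q.1 + at' * q.2)} := by
    ext g
    simp only [Set.mem_preimage, hS, Set.mem_setOf_eq, (hco g).1, (hco g).2,
      MeasurableEquiv.finTwoArrow_apply]
  rw [h2, (volume_preserving_finTwoArrow ℝ).measure_preimage]
  · exact quad_null af at' bf bt hat hbt
  · exact ((by apply measurableSet_eq_fun <;> measurability :
      MeasurableSet {q : ℝ × ℝ | af * bf * q.1 + at' * bt * q.2 =
        (bf * q.1 + bt * q.2) * (af * q.1 + at' * q.2)})).nullMeasurableSet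

/-- Genericity of `P(T|I=i) ≠ P(T|do(I=i))`: for a fixed image value `i`, the set of
parameter triples `(a, b, γ)` for which `P(T=1, I=i) = P(I=i) · P(T=1 | do(I=i))`
(the cross-multiplied form of `P(T=1|I=i) = P(T=1|do(I=i))`) has Lebesgue measure
zero. -/
theorem obs_equals_do_measure_zero (i : Bool) :
    volume {p : (Bool × Bool → ℝ) × (Bool × Bool → ℝ) × (Bool → ℝ) |
      (∑ h, p.1 (h, i) * p.2.1 (i, h) * p.2.2 h) =
        (∑ h, p.2.1 (i, h) * p.2.2 h) * (∑ h, p.1 (h, i) * p.2.2 h)} = 0 := by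
  classical
  set E := (Bool × Bool → ℝ) × (Bool × Bool → ℝ) × (Bool → ℝ) with hE
  set S' : Set E := {p : E |
      p.1 (true, i) * p.2.1 (i, true) * p.2.2 true +
        p.1 (false, i) * p.2.1 (i, false) * p.2.2 false =
      (p.2.1 (i, true) * p.2.2 true + p.2.1 (i, false) * p.2.2 false) *
        (p.1 (true, i) * p.2.2 true + p.1 (false, i) * p.2.2 false)} with hS'
  have hset : {p : E |
      (∑ h, p.1 (h, i) * p.2.1 (i, h) * p.2.2 h) =
        (∑ h, p.2.1 (i, h) * p.2.2 h) * (∑ h, p.1 (h, i) * p.2.2 h)} = S' := by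
    ext p
    simp only [hS', Set.mem_setOf_eq, Fintype.sum_bool]
  rw [hset]
  have ma : ∀ j, Measurable fun p : E => p.1 j :=
    fun j => (measurable_pi_apply j).comp measurable_fst
  have mb : ∀ j, Measurable fun p : E => p.2.1 j :=
    fun j => (measurable_pi_apply j).comp (measurable_fst.comp measurable_snd)
  have mg : ∀ h, Measurable fun p : E => p.2.2 h :=
    fun h => (measurable_pi_apply h).comp (measurable_snd.comp measurable_snd)
  have hS'm : MeasurableSet S' := by
    refine measurableSet_eq_fun ?_ ?_
    · exact (((ma _).mul (mb _)).mul (mg true)).add (((ma _).mul (mb _)).mul (mg false))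
    · exact (((mb _).mul (mg true)).add ((mb _).mul (mg false))).mul
        (((ma _).mul (mg true)).add ((ma _).mul (mg false)))
  set S₁ : Set E := {p : E | p.1 (true, i) = 0} with hS₁
  set S₂ : Set E := {p : E | p.2.1 (i, true) = 0} with hS₂
  set S₃ : Set E := (S' ∩ {p : E | p.1 (true, i) ≠ 0}) ∩ {p : E | p.2.1 (i, true) ≠ 0}
    with hS₃
  have hsub : S' ⊆ (S₁ ∪ S₂) ∪ S₃ := by
    intro p hp
    by_cases h1 : p.1 (true, i) = 0
    · exact Or.inl (Or.inl h1)
    by_cases h2 : p.2.1 (i, true) = 0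
    · exact Or.inl (Or.inr h2)
    exact Or.inr ⟨⟨hp, h1⟩, h2⟩
  refine measure_mono_null hsub (measure_union_null (measure_union_null ?_ ?_) ?_)
  · have h1 : S₁ = {a : Bool × Bool → ℝ | a (true, i) = 0} ×ˢ
        (Set.univ : Set ((Bool × Bool → ℝ) × (Bool → ℝ))) := by
      ext p
      exact ⟨fun h => ⟨h, Set.mem_univ _⟩, fun h => h.1⟩
    rw [h1, Measure.volume_eq_prod, Measure.prod_prod, hyperplane_null, zero_mul]
  · have h2 : S₂ = (Set.univ : Set (Bool × Bool → ℝ)) ×ˢ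
        (({b : Bool × Bool → ℝ | b (i, true) = 0}) ×ˢ (Set.univ : Set (Bool → ℝ))) := by
      ext p
      exact ⟨fun h => ⟨Set.mem_univ _, h, Set.mem_univ _⟩, fun h => h.2.1⟩
    rw [h2, Measure.volume_eq_prod, Measure.prod_prod, Measure.volume_eq_prod,
      Measure.prod_prod, hyperplane_null, zero_mul, mul_zero]
  · have hS₃m : MeasurableSet S₃ := by
      refine (hS'm.inter ?_).inter ?_
      · exact (measurableSet_eq_fun (ma (true, i)) measurable_const).compl
      · exact (measurableSet_eq_fun (mb (i, true)) measurable_const).compl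
    rw [Measure.volume_eq_prod, Measure.measure_prod_null hS₃m]
    refine Filter.Eventually.of_forall fun a => ?_
    have hsa : MeasurableSet (Prod.mk a ⁻¹' S₃) := hS₃m.preimage measurable_prodMk_left
    show (volume.prod volume) (Prod.mk a ⁻¹' S₃) = 0
    rw [Measure.measure_prod_null hsa]
    refine Filter.Eventually.of_forall fun b => ?_
    show volume (Prod.mk b ⁻¹' (Prod.mk a ⁻¹' S₃)) = 0
    by_cases ha : a (true, i) = 0
    · refine measure_mono_null (fun γ hγ => ?_) measure_empty
      exact absurd ha hγ.1.2
    by_cases hb : b (i, true) = 0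
    · refine measure_mono_null (fun γ hγ => ?_) measure_empty
      exact absurd hb hγ.2
    refine measure_mono_null (fun γ hγ => ?_)
      (quad_null_bool (a (false, i)) (a (true, i)) (b (i, false)) (b (i, true)) ha hb)
    have heq := hγ.1.1
    simp only [hS', Set.mem_setOf_eq] at heq ⊢
    linear_combination heq
end
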